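/- arXiv:2412.05387 — 5 statements merged into one kernel-verified Lean document; each statement's English description precedes it below -/
import Mathlib

section
/- For every real α > 0, every real β > 0, and every complex number z, the Mittag-Leffler series Σ_{k=0}^∞ z^k / Γ(αk + β) is (absolutely) summable; hence the Mittag-Leffler function E_{α,β}(z) is well defined for all z ∈ ℂ. -/
open Filter Real

/-- The Mittag-Leffler series `∑ zᵏ / Γ(αk + β)` is absolutely summable for all `z ∈ ℂ`,
hence the Mittag-Leffler function `E_{α,β}` is well defined. -/
theorem mittagLeffler_summable (α β : ℝ) (hα : 0 < α) (hβ : 0 < β) (z : ℂ) :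
    Summable (fun k : ℕ => ‖z ^ k / Complex.Gamma ((α * k + β : ℝ) : ℂ)‖) ∧
      Summable (fun k : ℕ => z ^ k / Complex.Gamma ((α * k + β : ℝ) : ℂ)) := by
  have hx : ∀ k : ℕ, 0 < α * k + β := fun k => by positivity
  have hG : ∀ k : ℕ, 0 < Real.Gamma (α * k + β) := fun k => Real.Gamma_pos_of_pos (hx k)
  have hnorm : ∀ k : ℕ, ‖z ^ k / Complex.Gamma ((α * k + β : ℝ) : ℂ)‖
      = ‖z‖ ^ k / Real.Gamma (α * k + β) := by
    intro k
    rw [norm_div, norm_pow, Complex.Gamma_ofReal, Complex.norm_real,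
      Real.norm_of_nonneg (hG k).le]
  set M := max 1 ((2 * ‖z‖ + 1) ^ α⁻¹) with hM
  have hM1 : (1:ℝ) ≤ M := le_max_left _ _
  obtain ⟨K, hK⟩ := exists_nat_ge ((1 + M - β) / α)
  have key : ∀ k : ℕ, K ≤ k →
      ‖z ^ (k+1) / Complex.Gamma ((α * ((k:ℕ)+1 : ℕ) + β : ℝ) : ℂ)‖
        ≤ (1/2) * ‖z ^ k / Complex.Gamma ((α * k + β : ℝ) : ℂ)‖ := by
    intro k hk
    have hx1 : 1 + M ≤ α * k + β := by
      have h1 : (1 + M - β) / α ≤ (k:ℝ) := hK.trans (by exact_mod_cast hk)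
      have h2 := (div_le_iff₀ hα).mp h1
      nlinarith
    set x := α * k + β with hxdef
    have hx2 : (2:ℝ) ≤ x := by linarith
    have hslope := Real.convexOn_log_Gamma.slope_mono_adjacent
      (x := x - 1) (y := x) (z := x + α)
      (Set.mem_Ioi.mpr (by linarith)) (Set.mem_Ioi.mpr (by linarith))
      (by linarith) (by linarith)
    have hGx : Real.Gamma x = (x - 1) * Real.Gamma (x - 1) := by
      have h := Real.Gamma_add_one (s := x - 1) (ne_of_gt (by linarith : (0:ℝ) < x - 1))
      rw [sub_add_cancel] at h
      exact h
    have hG1 : 0 < Real.Gamma (x - 1) := Real.Gamma_pos_of_pos (by linarith)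
    have hGx' : 0 < Real.Gamma x := Real.Gamma_pos_of_pos (by linarith)
    have hGxa : 0 < Real.Gamma (x + α) := Real.Gamma_pos_of_pos (by linarith)
    have hlog : Real.log (Real.Gamma x) - Real.log (Real.Gamma (x-1)) = Real.log (x-1) := by
      rw [hGx, Real.log_mul (by linarith) (ne_of_gt hG1)]; ring
    have hslope' : Real.log (x - 1) ≤
        (Real.log (Real.Gamma (x + α)) - Real.log (Real.Gamma x)) / α := by
      have h := hslope
      simp only [sub_sub_cancel, div_one, add_sub_cancel_left] at h
      calc Real.log (x-1) = Real.log (Real.Gamma x) - Real.log (Real.Gamma (x-1)) :=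
            hlog.symm
        _ ≤ _ := h
    have hGamma_ge : Real.Gamma x * (x - 1) ^ α ≤ Real.Gamma (x + α) := by
      have h1 : Real.log (Real.Gamma x) + α * Real.log (x - 1)
          ≤ Real.log (Real.Gamma (x + α)) := by
        have := (le_div_iff₀ hα).mp hslope'
        linarith [mul_comm α (Real.log (x-1))]
      have h2 : Real.Gamma x * (x - 1) ^ α
          = Real.exp (Real.log (Real.Gamma x) + α * Real.log (x - 1)) := by
        rw [Real.exp_add, Real.exp_log hGx', Real.rpow_def_of_pos (by linarith : (0:ℝ) < x - 1),
          mul_comm (Real.log (x-1)) α]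
      rw [h2, ← Real.exp_log hGxa]
      exact Real.exp_le_exp.mpr h1
    have hrp : (2 * ‖z‖ + 1 : ℝ) ≤ (x - 1) ^ α := by
      have h0 : (0:ℝ) ≤ 2 * ‖z‖ + 1 := by positivity
      have hMle : (2 * ‖z‖ + 1) ^ α⁻¹ ≤ x - 1 :=
        le_trans (le_max_right _ _) (by linarith)
      calc (2 * ‖z‖ + 1 : ℝ) = ((2 * ‖z‖ + 1) ^ α⁻¹) ^ α :=
            (Real.rpow_inv_rpow h0 (ne_of_gt hα)).symm
        _ ≤ (x - 1) ^ α := Real.rpow_le_rpow (Real.rpow_nonneg h0 _) hMle hα.le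
    have hfinal : (2 * ‖z‖ + 1) * Real.Gamma x ≤ Real.Gamma (x + α) := by
      calc (2 * ‖z‖ + 1) * Real.Gamma x ≤ (x-1) ^ α * Real.Gamma x :=
            mul_le_mul_of_nonneg_right hrp hGx'.le
        _ = Real.Gamma x * (x-1) ^ α := by ring
        _ ≤ _ := hGamma_ge
    have hxk1 : α * ((k:ℕ)+1 : ℕ) + β = x + α := by push_cast; ring
    rw [hnorm k, hxk1]
    have hn1 : ‖z ^ (k+1) / Complex.Gamma ((x + α : ℝ) : ℂ)‖
        = ‖z‖ ^ (k+1) / Real.Gamma (x + α) := by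
      rw [norm_div, norm_pow, Complex.Gamma_ofReal, Complex.norm_real,
        Real.norm_of_nonneg hGxa.le]
    rw [hn1, pow_succ]
    show ‖z‖ ^ k * ‖z‖ / Real.Gamma (x + α) ≤ 1/2 * (‖z‖ ^ k / Real.Gamma x)
    rw [mul_div_assoc' (1/2 : ℝ), div_le_div_iff₀ hGxa hGx']
    have hz0 : (0:ℝ) ≤ ‖z‖ := norm_nonneg z
    have hzk : (0:ℝ) ≤ ‖z‖ ^ k := by positivity
    nlinarith [mul_le_mul_of_nonneg_left hfinal (mul_nonneg hzk hz0)]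
  have hsum : Summable (fun k : ℕ => ‖z ^ k / Complex.Gamma ((α * k + β : ℝ) : ℂ)‖) := by
    apply summable_of_ratio_norm_eventually_le (r := 1/2) (by norm_num)
    filter_upwards [eventually_ge_atTop K] with k hk
    rw [Real.norm_of_nonneg (norm_nonneg _), Real.norm_of_nonneg (norm_nonneg _)]
    exact key k hk
  exact ⟨hsum, hsum.of_norm⟩
end

section
/- Let α > 0 and λ > 0. For every t > 0 the real-valued function f(t) := E_{α,1}(−λ t^α) = Σ_{k=0}^∞ (−λ t^α)^k / Γ(αk + 1) is differentiable at t with derivative f'(t) = −λ t^{α−1} E_{α,α}(−λ t^α) = −λ t^{α−1} Σ_{k=0}^∞ (−λ t^α)^k / Γ(αk + α). -/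
/-- The real Mittag-Leffler function `E_{α,β}(x) = ∑ xᵏ / Γ(αk + β)`. -/
noncomputable def mittagLefflerReal (α β x : ℝ) : ℝ :=
  ∑' k : ℕ, x ^ k / Real.Gamma (α * k + β)

/-!
Cutting the Euler integral at `A` gives `Γ(s) ≥ A^(s-1) e^(-A)`; choosing `A^α = 2|x| + 1`
dominates `E_{α,1}` near `x`, together with its termwise derivative, by a geometric series.
So `E_{α,1}` may be differentiated termwise, and `Γ(α(k+1) + 1) = α(k+1) Γ(αk + α)` turns the
derived series into `α⁻¹ E_{α,α}`. The chain rule with `(−λ tᵅ)' = −λ α t^(α−1)` concludes.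
-/

open Real Set MeasureTheory

theorem Real.rpow_sub_one_mul_exp_neg_le_Gamma {s A : ℝ} (hs : 1 ≤ s) (hA : 0 ≤ A) :
    A ^ (s - 1) * exp (-A) ≤ Gamma s := by
  have hint : IntegrableOn (fun x => exp (-x) * x ^ (s - 1)) (Ioi 0) :=
    GammaIntegral_convergent (by linarith)
  calc A ^ (s - 1) * exp (-A) = ∫ x in Ioi A, A ^ (s - 1) * exp (-x) := by
        rw [integral_const_mul, integral_exp_neg_Ioi]
    _ ≤ ∫ x in Ioi A, exp (-x) * x ^ (s - 1) := by
        refine setIntegral_mono_on ((integrableOn_exp_neg_Ioi A).const_mul _)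
          (hint.mono_set (Ioi_subset_Ioi hA)) measurableSet_Ioi fun x hx => ?_
        rw [mul_comm]
        gcongr
        exact hx.le
    _ ≤ ∫ x in Ioi 0, exp (-x) * x ^ (s - 1) :=
        setIntegral_mono_set hint
          ((ae_restrict_mem measurableSet_Ioi).mono fun x hx => by
            have : (0 : ℝ) < x := hx
            positivity)
          (Ioi_subset_Ioi hA).eventuallyLE
    _ = Gamma s := (Gamma_eq_integral (by linarith)).symm

theorem summable_pow_div_Gamma_mul_add {α b : ℝ} (hα : 0 < α) (hb : 1 ≤ b) (x : ℝ) :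
    Summable fun k : ℕ => x ^ k / Gamma (α * k + b) := by
  set A := (2 * |x| + 1) ^ α⁻¹
  have hA : 0 < A := by positivity
  have hAα : A ^ α = 2 * |x| + 1 := by
    rw [← rpow_mul (by positivity), inv_mul_cancel₀ hα.ne', rpow_one]
  have hGamma (k : ℕ) : (2 * |x| + 1) ^ k * (A ^ (b - 1) * exp (-A)) ≤ Gamma (α * k + b) := by
    calc (2 * |x| + 1) ^ k * (A ^ (b - 1) * exp (-A)) = A ^ (α * k + b - 1) * exp (-A) := by
          rw [add_sub_assoc, rpow_add hA, rpow_mul hA.le, hAα, rpow_natCast, mul_assoc]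
      _ ≤ Gamma (α * k + b) :=
          rpow_sub_one_mul_exp_neg_le_Gamma (le_add_of_nonneg_of_le (by positivity) hb) hA.le
  refine Summable.of_norm_bounded
    ((summable_geometric_of_lt_one (r := |x| / (2 * |x| + 1)) (by positivity) ?_).mul_left
      (A ^ (b - 1) * exp (-A))⁻¹) fun k => ?_
  · rw [div_lt_one (by positivity)]; linarith [abs_nonneg x]
  · calc ‖x ^ k / Gamma (α * k + b)‖ = |x| ^ k / Gamma (α * k + b) := by
          rw [norm_div, norm_pow, Real.norm_eq_abs,
            Real.norm_of_nonneg (Gamma_pos_of_pos (by positivity)).le]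
      _ ≤ |x| ^ k / ((2 * |x| + 1) ^ k * (A ^ (b - 1) * exp (-A))) := by
          gcongr
          exact hGamma k
      _ = (A ^ (b - 1) * exp (-A))⁻¹ * (|x| / (2 * |x| + 1)) ^ k := by
          rw [div_pow]; field_simp

theorem Real.Gamma_mul_succ_add_one {α : ℝ} (hα : 0 < α) (k : ℕ) :
    Gamma (α * (k + 1 : ℕ) + 1) = (α * (k + 1)) * Gamma (α * k + α) := by
  rw [show α * (k + 1 : ℕ) + 1 = (α * k + α) + 1 by push_cast; ring,
    Gamma_add_one (by positivity)]
  ring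

theorem tsum_mul_pow_sub_one_div_Gamma {α : ℝ} (hα : 0 < α) {x : ℝ}
    (hx : Summable fun k : ℕ => k * x ^ (k - 1) / Gamma (α * k + 1)) :
    ∑' k : ℕ, k * x ^ (k - 1) / Gamma (α * k + 1) = α⁻¹ * mittagLefflerReal α α x := by
  have hterm (k : ℕ) : ((k + 1 : ℕ) : ℝ) * x ^ (k + 1 - 1) / Gamma (α * (k + 1 : ℕ) + 1)
      = α⁻¹ * (x ^ k / Gamma (α * k + α)) := by
    have : Gamma (α * k + α) ≠ 0 := (Gamma_pos_of_pos (by positivity)).ne'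
    rw [Gamma_mul_succ_add_one hα, Nat.add_sub_cancel]
    push_cast
    field_simp
  rw [hx.tsum_eq_zero_add, tsum_congr hterm, tsum_mul_left, mittagLefflerReal]
  simp

theorem hasDerivAt_mittagLefflerReal_one {α : ℝ} (hα : 0 < α) (x : ℝ) :
    HasDerivAt (mittagLefflerReal α 1) (α⁻¹ * mittagLefflerReal α α x) x := by
  set R := |x| + 1
  have hx : x ∈ Metric.ball 0 R := by simp [R]
  have hbound (k : ℕ) (y : ℝ) (hy : y ∈ Metric.ball 0 R) :
      ‖k * y ^ (k - 1) / Gamma (α * k + 1)‖ ≤ (2 * R) ^ k / Gamma (α * k + 1) := by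
    have hyR : |y| ≤ R := (mem_ball_zero_iff.mp hy).le
    have hR : 1 ≤ R := by simp [R]
    rw [norm_div, Real.norm_of_nonneg (Gamma_pos_of_pos (by positivity)).le, norm_mul,
      norm_pow, Real.norm_eq_abs, Nat.abs_cast, mul_pow]
    gcongr
    · exact_mod_cast k.lt_two_pow_self.le
    · calc |y| ^ (k - 1) ≤ R ^ (k - 1) := by gcongr
        _ ≤ R ^ k := pow_le_pow_right₀ hR (Nat.sub_le k 1)
  have hderiv := hasDerivAt_tsum_of_isPreconnected
    (summable_pow_div_Gamma_mul_add hα le_rfl (2 * R)) Metric.isOpen_ball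
    (convex_ball 0 R).isPreconnected
    (fun k y _ => (hasDerivAt_pow k y).div_const (Gamma (α * k + 1))) hbound hx
    (summable_pow_div_Gamma_mul_add hα le_rfl x) hx
  rwa [tsum_mul_pow_sub_one_div_Gamma hα
    (.of_norm_bounded (summable_pow_div_Gamma_mul_add hα le_rfl (2 * R)) (hbound · x hx))]
    at hderiv

theorem mittagLeffler_hasDerivAt_general (α l : ℝ) (hα : 0 < α) (t : ℝ) (ht : 0 < t) :
    HasDerivAt (fun τ : ℝ => mittagLefflerReal α 1 (-l * τ ^ α))
      (-l * t ^ (α - 1) * mittagLefflerReal α α (-l * t ^ α)) t := by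
  have hinner : HasDerivAt (fun τ : ℝ => -l * τ ^ α) (-l * (α * t ^ (α - 1))) t :=
    (hasDerivAt_rpow_const (Or.inl ht.ne')).const_mul (-l)
  exact ((hasDerivAt_mittagLefflerReal_one hα _).comp t hinner).congr_deriv (by field_simp)

/-- For `α > 0`, `λ > 0` and `t > 0`, the function `t ↦ E_{α,1}(−λ tᵅ)` is differentiable
at `t` with derivative `−λ t^(α−1) E_{α,α}(−λ tᵅ)`. -/
theorem mittagLeffler_hasDerivAt (α l : ℝ) (hα : 0 < α) (hl : 0 < l) (t : ℝ) (ht : 0 < t) :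
    HasDerivAt (fun τ : ℝ => mittagLefflerReal α 1 (-l * τ ^ α))
      (-l * t ^ (α - 1) * mittagLefflerReal α α (-l * t ^ α)) t :=
  mittagLeffler_hasDerivAt_general α l hα t ht
end

section
/- Let 0 < α < 1 and λ > 0, and set f(τ) := E_{α,1}(−λ τ^α) for τ > 0. Then for every t > 0 the left Caputo fractional derivative of f of order α satisfies ∂_t^α f(t) = −λ E_{α,1}(−λ t^α), i.e. (1/Γ(1−α)) ∫_0^t f'(τ) (t−τ)^{−α} dτ = −λ E_{α,1}(−λ t^α), where f'(τ) = −λ τ^{α−1} E_{α,α}(−λ τ^α) is the derivative of f at τ. -/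
open MeasureTheory Set

namespace Real

theorem Gamma_mul_pow_le_Gamma_add_nat {y : ℝ} (hy : 0 < y) (n : ℕ) :
    Gamma y * y ^ n ≤ Gamma (y + n) := by
  induction n with
  | zero => simp
  | succ n ih =>
    have hyn : 0 < y + n := by positivity
    calc Gamma y * y ^ (n + 1) = y * (Gamma y * y ^ n) := by ring
      _ ≤ (y + n) * Gamma (y + n) :=
          mul_le_mul (by linarith [n.cast_nonneg (α := ℝ)]) ih
            (mul_nonneg (Gamma_pos_of_pos hy).le (by positivity)) hyn.le
      _ = Gamma (y + ↑(n + 1)) := by rw [Nat.cast_succ, ← add_assoc, Gamma_add_one hyn.ne']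

theorem one_le_Gamma {s : ℝ} (hs : 2 ≤ s) : 1 ≤ Gamma s := by
  rw [← Gamma_two]
  exact Gamma_strictMonoOn_Ici.monotoneOn (mem_Ici.2 le_rfl) (mem_Ici.2 hs) hs

theorem rpow_sub_le_Gamma {c s : ℝ} (hc : 2 ≤ c) (hcs : c ≤ s) : c ^ (s - (c + 1)) ≤ Gamma s := by
  -- write `s = (s - n) + n` with `c ≤ s - n < c + 1`
  set n := ⌊s - c⌋₊
  have hn : s - c - 1 < n := by linarith [Nat.lt_floor_add_one (s - c)]
  have hcn : c ≤ s - n := by linarith [Nat.floor_le (sub_nonneg.2 hcs)]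
  calc c ^ (s - (c + 1)) ≤ c ^ (n : ℝ) := rpow_le_rpow_of_exponent_le (by linarith) (by linarith)
    _ = 1 * c ^ n := by rw [rpow_natCast, one_mul]
    _ ≤ Gamma (s - n) * (s - n) ^ n :=
        mul_le_mul (one_le_Gamma (by linarith)) (pow_le_pow_left₀ (by linarith) hcn n)
          (by positivity) (Gamma_pos_of_pos (by linarith)).le
    _ ≤ Gamma (s - n + n) := Gamma_mul_pow_le_Gamma_add_nat (by linarith) n
    _ = Gamma s := by rw [sub_add_cancel]

theorem summable_pow_div_Gamma {α : ℝ} (hα : 0 < α) (β x : ℝ) :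
    Summable fun k : ℕ => x ^ k / Gamma (α * k + β) := by
  set c := max 2 ((2 * |x|) ^ α⁻¹)
  have hc : 2 ≤ c := le_max_left _ _
  have hc0 : 0 < c := by linarith
  have hcx : 2 * |x| ≤ c ^ α := by
    calc 2 * |x| = ((2 * |x|) ^ α⁻¹) ^ α := (rpow_inv_rpow (by positivity) hα.ne').symm
      _ ≤ c ^ α := rpow_le_rpow (by positivity) (le_max_right _ _) hα.le
  refine .of_norm_bounded_eventually_nat
    (summable_geometric_two.mul_left (c ^ (c + 1 - β))) ?_
  have hk : ∀ᶠ k : ℕ in Filter.atTop, c ≤ α * k + β :=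
    (Filter.tendsto_atTop_add_const_right _ β
      (tendsto_natCast_atTop_atTop.const_mul_atTop hα)).eventually_ge_atTop c
  filter_upwards [hk] with k hk
  have hG := rpow_sub_le_Gamma hc hk
  have hpow : c ^ (α * k + β - (c + 1)) = (c ^ α) ^ k / c ^ (c + 1 - β) := by
    rw [← rpow_mul_natCast hc0.le, ← rpow_sub hc0]
    ring_nf
  rw [norm_div, norm_pow, norm_eq_abs, norm_of_nonneg (Gamma_pos_of_pos (by linarith)).le]
  calc |x| ^ k / Gamma (α * k + β) ≤ (c ^ α / 2) ^ k / c ^ (α * k + β - (c + 1)) :=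
        div_le_div₀ (by positivity) (pow_le_pow_left₀ (abs_nonneg x) (by linarith) k)
          (by positivity) hG
    _ = c ^ (c + 1 - β) * (1 / 2) ^ k := by
        rw [hpow, div_pow, one_div_pow]
        field_simp

theorem intervalIntegrable_rpow_mul_rpow_sub {a b t : ℝ} (ha : 0 < a) (hb : 0 < b) (ht : 0 < t) :
    IntervalIntegrable (fun x => x ^ (a - 1) * (t - x) ^ (b - 1)) volume 0 t := by
  have hleft : IntervalIntegrable (fun x => x ^ (a - 1) * (t - x) ^ (b - 1)) volume 0 (t / 2) := by
    refine (intervalIntegral.intervalIntegrable_rpow' (by linarith)).mul_continuousOn ?_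
    refine ContinuousOn.rpow_const (by fun_prop) fun x hx => Or.inl ?_
    rw [uIcc_of_le (by linarith)] at hx
    linarith [hx.2]
  have hright : IntervalIntegrable (fun x => x ^ (a - 1) * (t - x) ^ (b - 1)) volume (t / 2) t := by
    have h := ((intervalIntegral.intervalIntegrable_rpow' (r := b - 1) (by linarith)).comp_sub_left
      t (a := 0) (b := t / 2)).symm
    rw [sub_zero, show t - t / 2 = t / 2 by ring] at h
    refine h.continuousOn_mul (ContinuousOn.rpow_const continuousOn_id fun x hx => Or.inl ?_)
    rw [uIcc_of_le (by linarith)] at hx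
    exact (lt_of_lt_of_le (by linarith) hx.1).ne'
  exact hleft.trans hright

theorem integral_rpow_mul_rpow_sub {a b t : ℝ} (ha : 0 < a) (hb : 0 < b) (ht : 0 < t) :
    ∫ x in 0..t, x ^ (a - 1) * (t - x) ^ (b - 1) =
      Gamma a * Gamma b / Gamma (a + b) * t ^ (a + b - 1) := by
  have hcast : ((∫ x in 0..t, x ^ (a - 1) * (t - x) ^ (b - 1) : ℝ) : ℂ) =
      ∫ x in 0..t, (x : ℂ) ^ ((a : ℂ) - 1) * ((t : ℂ) - x) ^ ((b : ℂ) - 1) := by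
    rw [← intervalIntegral.integral_ofReal]
    refine intervalIntegral.integral_congr fun x hx => ?_
    rw [uIcc_of_le ht.le] at hx
    push_cast [Complex.ofReal_cpow hx.1, Complex.ofReal_cpow (sub_nonneg.2 hx.2)]
    rfl
  apply Complex.ofReal_injective
  rw [hcast, Complex.betaIntegral_scaled _ _ ht,
    Complex.betaIntegral_eq_Gamma_mul_div _ _ (by simpa) (by simpa)]
  push_cast [Complex.ofReal_cpow ht.le, ← Complex.Gamma_ofReal]
  ring

end Real

open Real

theorem integral_rpow_mul_mittagLefflerReal_mul_rpow_sub {α β γ t : ℝ} (hα : 0 < α)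
    (hβ : 0 < β) (hγ : 0 < γ) (ht : 0 < t) (x : ℝ) :
    ∫ τ in 0..t, τ ^ (β - 1) * mittagLefflerReal α β (x * τ ^ α) * (t - τ) ^ (γ - 1) =
      Gamma γ * t ^ (β + γ - 1) * mittagLefflerReal α (β + γ) (x * t ^ α) := by
  have hs : ∀ k : ℕ, 0 < α * k + β := fun k => by positivity
  set F : ℝ → ℕ → ℝ → ℝ := fun y k τ =>
    y ^ k / Gamma (α * k + β) * (τ ^ (α * k + β - 1) * (t - τ) ^ (γ - 1))
  have hF_integrable : ∀ y k, IntervalIntegrable (F y k) volume 0 t := fun y k =>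
    (intervalIntegrable_rpow_mul_rpow_sub (hs k) hγ ht).const_mul _
  have hF_integral : ∀ y k, ∫ τ in 0..t, F y k τ =
      Gamma γ * t ^ (β + γ - 1) * ((y * t ^ α) ^ k / Gamma (α * k + (β + γ))) := by
    intro y k
    have hG : Gamma (α * k + β) ≠ 0 := (Gamma_pos_of_pos (hs k)).ne'
    rw [intervalIntegral.integral_const_mul, integral_rpow_mul_rpow_sub (hs k) hγ ht, mul_pow,
      ← rpow_mul_natCast ht.le, add_assoc, show α * k + (β + γ) - 1 = α * k + (β + γ - 1) by ring,
      rpow_add ht]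
    field_simp
  have hF_norm : ∀ k, ∫ τ in Ioc 0 t, ‖F x k τ‖ = ∫ τ in Ioc 0 t, F |x| k τ := by
    refine fun k => setIntegral_congr_fun measurableSet_Ioc fun τ hτ => ?_
    rw [Real.norm_eq_abs, abs_mul, abs_div, abs_pow, abs_of_pos (Gamma_pos_of_pos (hs k)),
      abs_of_nonneg (mul_nonneg (rpow_nonneg hτ.1.le _) (rpow_nonneg (sub_nonneg.2 hτ.2) _))]
  have hsum : Summable fun k => ∫ τ in Ioc 0 t, ‖F x k τ‖ := by
    simp_rw [hF_norm, ← intervalIntegral.integral_of_le ht.le, hF_integral]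
    exact (summable_pow_div_Gamma hα _ _).mul_left _
  have hexpand : ∀ τ ∈ Ioc 0 t,
      τ ^ (β - 1) * mittagLefflerReal α β (x * τ ^ α) * (t - τ) ^ (γ - 1) = ∑' k, F x k τ := by
    intro τ hτ
    rw [mittagLefflerReal, ← tsum_mul_left, ← tsum_mul_right]
    refine tsum_congr fun k => ?_
    simp only [F]
    rw [mul_pow, ← rpow_mul_natCast hτ.1.le, show α * k + β - 1 = α * k + (β - 1) by ring,
      rpow_add hτ.1]
    ring
  rw [intervalIntegral.integral_of_le ht.le, setIntegral_congr_fun measurableSet_Ioc hexpand,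
    ← integral_tsum_of_summable_integral_norm (fun k => (hF_integrable x k).1) hsum]
  simp_rw [← intervalIntegral.integral_of_le ht.le, hF_integral, tsum_mul_left, mittagLefflerReal]

theorem caputo_deriv_mittagLeffler_general (α l : ℝ) (hα0 : 0 < α) (hα1 : α < 1)
    (t : ℝ) (ht : 0 < t) :
    (1 / Real.Gamma (1 - α)) *
        ∫ τ in (0 : ℝ)..t,
          (-l * τ ^ (α - 1) * mittagLefflerReal α α (-l * τ ^ α)) * (t - τ) ^ (-α) =
      -l * mittagLefflerReal α 1 (-l * t ^ α) := by
  have h := integral_rpow_mul_mittagLefflerReal_mul_rpow_sub hα0 hα0 (sub_pos.2 hα1) ht (-l)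
  rw [sub_sub_cancel_left, add_sub_cancel, sub_self, rpow_zero, mul_one] at h
  have hG : Gamma (1 - α) ≠ 0 := (Gamma_pos_of_pos (sub_pos.2 hα1)).ne'
  simp only [mul_assoc (-l), intervalIntegral.integral_const_mul]
  rw [h]
  field_simp

/-- For `0 < α < 1`, `λ > 0` and `t > 0`, the left Caputo fractional derivative of order `α`
of `f(τ) = E_{α,1}(−λ τᵅ)` equals `−λ E_{α,1}(−λ tᵅ)`:
`(1/Γ(1−α)) ∫₀ᵗ f'(τ) (t−τ)^(−α) dτ = −λ E_{α,1}(−λ tᵅ)`,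
where `f'(τ) = −λ τ^(α−1) E_{α,α}(−λ τᵅ)`. -/
theorem caputo_deriv_mittagLeffler (α l : ℝ) (hα0 : 0 < α) (hα1 : α < 1) (hl : 0 < l)
    (t : ℝ) (ht : 0 < t) :
    (1 / Real.Gamma (1 - α)) *
        ∫ τ in (0 : ℝ)..t,
          (-l * τ ^ (α - 1) * mittagLefflerReal α α (-l * τ ^ α)) * (t - τ) ^ (-α) =
      -l * mittagLefflerReal α 1 (-l * t ^ α) :=
  caputo_deriv_mittagLeffler_general α l hα0 hα1 t ht
end

section
/- Let H be a real Hilbert space with a Hilbert (orthonormal) basis (φ_k)_{k∈ℕ}, let T > 0 and 0 < α < 1, and let λ : ℕ → ℝ be a sequence of positive reals. If g₁, g₂ ∈ H satisfy Σ_{k=0}^∞ ⟨g₁, φ_k⟩ E_{α,1}(−λ_k T^α) φ_k = Σ_{k=0}^∞ ⟨g₂, φ_k⟩ E_{α,1}(−λ_k T^α) φ_k (equality in H of the convergent series), then g₁ = g₂. -/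
open scoped RealInnerProductSpace

/-!
The coefficients of the final-time value are `⟨g, φ_k⟩ E_{α,1}(-λ_k Tᵅ)`, so it suffices that
`0 < E_{α,1}(-x) ≤ 1` for `x ≥ 0`: the multipliers are then nonzero and bounded, the series
converge in `H`, and the coefficients of `g` can be read off. Writing `w(t) = E_{α,1}(-tᵅ)`,
termwise integration with Euler's Beta integral gives the Volterra equation
`∫₀ᵗ (t - s)^(α-1) w(s) ds = Γ(α) (1 - w(t))`. If `w` had a first zero `t₀`, then for `s` just
below `t₀` the equation, together with the monotonicity of the kernel in `t` (as `α ≤ 1`),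
would bound `w(s)` by a small multiple of `max w` near `t₀`, which is impossible. Positivity then
gives `w ≤ 1` from the same equation.
-/

open Real Filter Set Topology MeasureTheory

namespace Real

theorem Gamma_add_one_le_Gamma_add_mul_rpow {α s : ℝ} (hα0 : 0 < α) (hα1 : α ≤ 1)
    (hs : 0 < s + α) : Gamma (s + 1) ≤ Gamma (s + α) * (s + α) ^ (1 - α) := by
  rcases hα1.lt_or_eq with hα1 | rfl
  · have h := Gamma_mul_add_mul_le_rpow_Gamma_mul_rpow_Gamma hs (by linarith : 0 < s + α + 1)
      hα0 (sub_pos.2 hα1) (add_sub_cancel α 1)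
    rwa [show α * (s + α) + (1 - α) * (s + α + 1) = s + 1 by ring, Gamma_add_one hs.ne',
      mul_rpow hs.le (Gamma_pos_of_pos hs).le, mul_left_comm, ← rpow_add (Gamma_pos_of_pos hs),
      add_sub_cancel, rpow_one, mul_comm] at h
  · simp

theorem Gamma_div_Gamma_add_le {α s : ℝ} (hα0 : 0 < α) (hα1 : α ≤ 1) (hs : α ≤ s) :
    Gamma s / Gamma (s + α) ≤ 2 * s ^ (-α) := by
  have hs0 : 0 < s := hα0.trans_le hs
  have hΓ : 0 < Gamma (s + α) := Gamma_pos_of_pos (by linarith)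
  have h2 : (2 * s) ^ (1 - α) ≤ 2 * s ^ (1 - α) := by
    rw [mul_rpow zero_le_two hs0.le]
    gcongr
    exact rpow_le_self_of_one_le one_le_two (by linarith)
  calc Gamma s / Gamma (s + α) = Gamma (s + 1) / (s * Gamma (s + α)) := by
        rw [Gamma_add_one hs0.ne', mul_div_mul_left _ _ hs0.ne']
    _ ≤ Gamma (s + α) * (2 * s) ^ (1 - α) / (s * Gamma (s + α)) := by
        gcongr
        exact (Gamma_add_one_le_Gamma_add_mul_rpow hα0 hα1 (by linarith)).trans
          (by gcongr; linarith)
    _ ≤ Gamma (s + α) * (2 * s ^ (1 - α)) / (s * Gamma (s + α)) := by gcongr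
    _ = 2 * s ^ (-α) := by
        rw [rpow_sub hs0, rpow_one, rpow_neg hs0.le]
        field_simp

theorem tendsto_Gamma_div_Gamma_add_atTop {α : ℝ} (hα0 : 0 < α) (hα1 : α ≤ 1) :
    Tendsto (fun s => Gamma s / Gamma (s + α)) atTop (𝓝 0) := by
  have hlim : Tendsto (fun s : ℝ => 2 * s ^ (-α)) atTop (𝓝 0) := by
    simpa using (tendsto_rpow_neg_atTop hα0).const_mul 2
  refine tendsto_of_tendsto_of_tendsto_of_le_of_le' tendsto_const_nhds hlim ?_ ?_
  · filter_upwards [eventually_gt_atTop 0] with s hs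
    exact div_nonneg (Gamma_pos_of_pos hs).le (Gamma_pos_of_pos (by linarith)).le
  · filter_upwards [eventually_ge_atTop α] with s hs
    exact Gamma_div_Gamma_add_le hα0 hα1 hs

end Real

noncomputable def mittagLefflerSeries (α β : ℝ) : FormalMultilinearSeries ℝ ℝ ℝ :=
  .ofScalars ℝ fun k => (Gamma (α * k + β))⁻¹

section MittagLeffler

variable {α β : ℝ}

theorem mittagLefflerSeries_radius (hα0 : 0 < α) (hα1 : α ≤ 1) (hβ : 0 < β) :
    (mittagLefflerSeries α β).radius = ⊤ := by
  have hΓ (k : ℕ) : 0 < Gamma (α * k + β) := Gamma_pos_of_pos (by positivity)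
  refine FormalMultilinearSeries.ofScalars_radius_eq_top_of_tendsto ℝ _
    (Eventually.of_forall fun k => (inv_pos.2 (hΓ k)).ne') ?_
  have hlin : Tendsto (fun k : ℕ => α * k + β) atTop atTop :=
    tendsto_atTop_add_const_right _ β (tendsto_natCast_atTop_atTop.const_mul_atTop hα0)
  refine ((tendsto_Gamma_div_Gamma_add_atTop hα0 hα1).comp hlin).congr fun k => ?_
  simp only [Function.comp_apply, norm_inv, Real.norm_of_nonneg (hΓ _).le, inv_div_inv]
  push_cast
  ring_nf

theorem mittagLefflerReal_eq_sum (α β : ℝ) :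
    mittagLefflerReal α β = (mittagLefflerSeries α β).sum := by
  ext x
  rw [mittagLefflerSeries, ← FormalMultilinearSeries.ofScalarsSum,
    FormalMultilinearSeries.ofScalars_sum_eq]
  exact tsum_congr fun k => by rw [smul_eq_mul, inv_mul_eq_div]

theorem summable_pow_div_Gamma (hα0 : 0 < α) (hα1 : α ≤ 1) (hβ : 0 < β) (x : ℝ) :
    Summable fun k : ℕ => x ^ k / Gamma (α * k + β) := by
  have hx : x ∈ Metric.eball (0 : ℝ) (mittagLefflerSeries α β).radius := by
    simp [mittagLefflerSeries_radius hα0 hα1 hβ]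
  simpa [mittagLefflerSeries, FormalMultilinearSeries.ofScalars_apply_eq, div_eq_mul_inv]
    using (mittagLefflerSeries α β).summable hx

theorem continuous_mittagLefflerReal (hα0 : 0 < α) (hα1 : α ≤ 1) (hβ : 0 < β) :
    Continuous (mittagLefflerReal α β) := by
  rw [← continuousOn_univ, mittagLefflerReal_eq_sum]
  simpa [mittagLefflerSeries_radius hα0 hα1 hβ] using (mittagLefflerSeries α β).continuousOn

theorem mittagLefflerReal_zero (α β : ℝ) : mittagLefflerReal α β 0 = (Gamma β)⁻¹ := by
  rw [mittagLefflerReal, tsum_eq_single 0 fun k hk => by simp [hk]]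
  simp

theorem hasSum_pow_succ_div_Gamma (hα0 : 0 < α) (hα1 : α ≤ 1) (hβ : 0 < β) (x : ℝ) :
    HasSum (fun k : ℕ => x ^ (k + 1) / Gamma (α * (k + 1) + β))
      (mittagLefflerReal α β x - (Gamma β)⁻¹) := by
  have h := (summable_pow_div_Gamma hα0 hα1 hβ x).hasSum
  rw [← hasSum_nat_add_iff' 1] at h
  simpa [mittagLefflerReal] using h

end MittagLeffler

theorem Real.integral_sub_rpow_mul_rpow {a b t : ℝ} (ha : 0 < a) (hb : 0 < b) (ht : 0 < t) :
    ∫ s in 0..t, (t - s) ^ (a - 1) * s ^ (b - 1) =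
      Gamma a * Gamma b / Gamma (a + b) * t ^ (a + b - 1) := by
  apply Complex.ofReal_injective
  have hcpow : ∀ s ∈ uIcc 0 t, (((t - s) ^ (a - 1) * s ^ (b - 1) : ℝ) : ℂ) =
      (s : ℂ) ^ ((b : ℂ) - 1) * ((t : ℂ) - s) ^ ((a : ℂ) - 1) := by
    intro s hs
    rw [uIcc_of_le ht.le] at hs
    push_cast
    rw [Complex.ofReal_cpow (sub_nonneg.2 hs.2), Complex.ofReal_cpow hs.1, mul_comm]
    push_cast
    rfl
  rw [← intervalIntegral.integral_ofReal, intervalIntegral.integral_congr hcpow,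
    Complex.betaIntegral_scaled _ _ ht, Complex.betaIntegral_eq_Gamma_mul_div _ _ (by simpa)
      (by simpa), show (b : ℂ) + a - 1 = ((a + b - 1 : ℝ) : ℂ) by push_cast; ring,
    ← Complex.ofReal_cpow ht.le, show (b : ℂ) + a = ((a + b : ℝ) : ℂ) by push_cast; ring]
  simp only [Complex.Gamma_ofReal]
  push_cast
  ring

theorem exists_first_zero {f : ℝ → ℝ} {a b : ℝ} (hab : a ≤ b) (hf : ContinuousOn f (Icc a b))
    (ha : 0 < f a) (hb : f b ≤ 0) : ∃ c ∈ Ioc a b, f c = 0 ∧ ∀ s ∈ Ico a c, 0 < f s := by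
  have hZ : IsCompact (Icc a b ∩ f ⁻¹' {0}) :=
    isCompact_Icc.of_isClosed_subset
      (hf.preimage_isClosed_of_isClosed isClosed_Icc isClosed_singleton) inter_subset_left
  obtain ⟨c₁, hc₁, hfc₁⟩ := intermediate_value_Icc' hab hf ⟨hb, ha.le⟩
  obtain ⟨c, ⟨hc, hfc⟩, hleast⟩ := hZ.exists_isLeast ⟨c₁, hc₁, hfc₁⟩
  refine ⟨c, ⟨hc.1.lt_of_ne ?_, hc.2⟩, hfc, fun s hs => ?_⟩
  · rintro rfl
    exact ha.ne' hfc
  by_contra! hfs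
  obtain ⟨z, hz, hfz⟩ := intermediate_value_Icc' hs.1
    (hf.mono (Icc_subset_Icc le_rfl (hs.2.le.trans hc.2))) ⟨hfs, ha.le⟩
  exact (hz.2.trans_lt hs.2).not_ge (hleast ⟨⟨hz.1, hz.2.trans (hs.2.le.trans hc.2)⟩, hfz⟩)

noncomputable def mittagLefflerRelaxation (α t : ℝ) : ℝ :=
  mittagLefflerReal α 1 (-(t ^ α))

section Relaxation

variable {α : ℝ}

local notation "w" => mittagLefflerRelaxation α

theorem mittagLefflerRelaxation_zero (hα0 : 0 < α) : w 0 = 1 := by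
  simp [mittagLefflerRelaxation, zero_rpow hα0.ne', mittagLefflerReal_zero]

theorem continuous_mittagLefflerRelaxation (hα0 : 0 < α) (hα1 : α ≤ 1) : Continuous w :=
  (continuous_mittagLefflerReal hα0 hα1 one_pos).comp (continuous_rpow_const hα0.le).neg

theorem integral_sub_rpow_mul_rpow_pow (hα0 : 0 < α) {t : ℝ} (ht : 0 < t) (k : ℕ) :
    ∫ s in 0..t, (t - s) ^ (α - 1) * (s ^ α) ^ k =
      Gamma α * Gamma (α * k + 1) / Gamma (α * (k + 1) + 1) * (t ^ α) ^ (k + 1) := by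
  have hpow : ∀ s ∈ uIcc 0 t, (t - s) ^ (α - 1) * (s ^ α) ^ k =
      (t - s) ^ (α - 1) * s ^ (α * k + 1 - 1) := by
    intro s hs
    rw [uIcc_of_le ht.le] at hs
    rw [add_sub_cancel_right, ← rpow_natCast, ← rpow_mul hs.1]
  rw [intervalIntegral.integral_congr hpow,
    integral_sub_rpow_mul_rpow hα0 (by positivity) ht, ← rpow_natCast, ← rpow_mul ht.le]
  push_cast
  ring_nf

theorem intervalIntegrable_sub_rpow_mul (hα0 : 0 < α) {g : ℝ → ℝ} (hg : Continuous g)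
    (t a b : ℝ) : IntervalIntegrable (fun s => (t - s) ^ (α - 1) * g s) volume a b := by
  have hker : IntervalIntegrable (fun s => (t - s) ^ (α - 1)) volume a b := by
    simpa using (intervalIntegral.intervalIntegrable_rpow' (r := α - 1) (by linarith)
      (a := t - b) (b := t - a)).comp_sub_left t |>.symm
  exact hker.mul_continuousOn hg.continuousOn

theorem integral_sub_rpow_mul_mittagLefflerRelaxation (hα0 : 0 < α) (hα1 : α ≤ 1) {t : ℝ}
    (ht : 0 ≤ t) : ∫ s in 0..t, (t - s) ^ (α - 1) * w s = Gamma α * (1 - w t) := by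
  rcases ht.eq_or_lt with rfl | ht
  · simp [mittagLefflerRelaxation_zero hα0]
  have hsum := summable_pow_div_Gamma hα0 hα1 one_pos
  let F (k : ℕ) (s : ℝ) : ℝ := (t - s) ^ (α - 1) * ((-(s ^ α)) ^ k / Gamma (α * k + 1))
  have htermwise :
      HasSum (fun k => ∫ s in 0..t, F k s) (∫ s in 0..t, (t - s) ^ (α - 1) * w s) := by
    refine intervalIntegral.hasSum_integral_of_dominated_convergence
      (fun k s => (t - s) ^ (α - 1) * ((t ^ α) ^ k / Gamma (α * k + 1)))
      (fun k => (by fun_prop : Measurable (F k)).aestronglyMeasurable)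
      (fun k => .of_forall fun s hs => ?_) (.of_forall fun s _ => (hsum _).mul_left _) ?_
      (.of_forall fun s _ => (hsum _).hasSum.mul_left _)
    · rw [uIoc_of_le ht.le] at hs
      have hker := rpow_nonneg (sub_nonneg.2 hs.2) (α - 1)
      have hsα := rpow_nonneg hs.1.le α
      rw [norm_mul, norm_div, norm_pow, norm_neg, Real.norm_of_nonneg hker,
        Real.norm_of_nonneg hsα, Real.norm_of_nonneg (Gamma_pos_of_pos (by positivity)).le]
      gcongr
      exacts [hs.1.le, hs.2]
    · simp_rw [tsum_mul_left]
      exact intervalIntegrable_sub_rpow_mul hα0 continuous_const t 0 t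
  have hterm (k : ℕ) : ∫ s in 0..t, F k s =
      -Gamma α * ((-(t ^ α)) ^ (k + 1) / Gamma (α * (k + 1) + 1)) :=
    calc _ = (-1) ^ k / Gamma (α * k + 1) * ∫ s in 0..t, (t - s) ^ (α - 1) * (s ^ α) ^ k := by
          rw [← intervalIntegral.integral_const_mul]
          congr with s
          rw [neg_pow]
          ring
      _ = _ := by
          rw [integral_sub_rpow_mul_rpow_pow hα0 ht, neg_pow (t ^ α), pow_succ (-1 : ℝ)]
          field_simp
  have hvalue := (hasSum_pow_succ_div_Gamma hα0 hα1 one_pos (-(t ^ α))).mul_left (-Gamma α)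
  rw [← funext hterm, Gamma_one, inv_one] at hvalue
  rw [htermwise.unique hvalue, mittagLefflerRelaxation]
  ring

theorem mittagLefflerRelaxation_sub_le (hα0 : 0 < α) (hα1 : α ≤ 1) {r t M : ℝ} (hr : 0 ≤ r)
    (hrt : r ≤ t) (hnonneg : ∀ s ∈ Ioo 0 r, 0 ≤ w s) (hM : ∀ s ∈ Icc r t, w s ≤ M) :
    Gamma α * (w r - w t) ≤ M * ((t - r) ^ α / α) := by
  have hint (u a b : ℝ) := intervalIntegrable_sub_rpow_mul hα0
    (continuous_mittagLefflerRelaxation hα0 hα1) u a b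
  have hnear : ∫ s in 0..r, (t - s) ^ (α - 1) * w s ≤ ∫ s in 0..r, (r - s) ^ (α - 1) * w s :=
    intervalIntegral.integral_mono_on_of_le_Ioo hr (hint t 0 r) (hint r 0 r) fun s hs =>
      mul_le_mul_of_nonneg_right
        (rpow_le_rpow_of_nonpos (sub_pos.2 hs.2) (by linarith) (by linarith)) (hnonneg s hs)
  have hfar : ∫ s in r..t, (t - s) ^ (α - 1) * w s ≤ M * ((t - r) ^ α / α) :=
    calc _ ≤ ∫ s in r..t, (t - s) ^ (α - 1) * M :=
          intervalIntegral.integral_mono_on hrt (hint t r t)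
            (intervalIntegrable_sub_rpow_mul hα0 continuous_const t r t) fun s hs =>
              mul_le_mul_of_nonneg_left (hM s hs) (rpow_nonneg (sub_nonneg.2 hs.2) _)
      _ = M * ((t - r) ^ α / α) := by
          rw [intervalIntegral.integral_mul_const, mul_comm,
            intervalIntegral.integral_comp_sub_left (fun x => x ^ (α - 1)), sub_self,
            integral_rpow (Or.inl (by linarith)), sub_add_cancel, zero_rpow hα0.ne', sub_zero]
  have hsplit := intervalIntegral.integral_add_adjacent_intervals (hint t 0 r) (hint t r t)
  have hr' := integral_sub_rpow_mul_mittagLefflerRelaxation hα0 hα1 hr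
  have ht' := integral_sub_rpow_mul_mittagLefflerRelaxation hα0 hα1 (hr.trans hrt)
  linarith

theorem mittagLefflerRelaxation_pos (hα0 : 0 < α) (hα1 : α ≤ 1) {t : ℝ} (ht : 0 ≤ t) :
    0 < w t := by
  have hw := continuous_mittagLefflerRelaxation hα0 hα1
  by_contra! hwt
  obtain ⟨t₀, ht₀, hwt₀, hpos⟩ := exists_first_zero ht hw.continuousOn
    (by simp [mittagLefflerRelaxation_zero hα0]) hwt
  -- With `δ ^ α ≤ α Γ(α) / 2`, the maximum `M > 0` of `w` on `[t₀ - δ, t₀]` would satisfy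
  -- `Γ(α) M ≤ M δ ^ α / α ≤ Γ(α) M / 2`.
  have hΓ := Gamma_pos_of_pos hα0
  set δ := min t₀ ((α * Gamma α / 2) ^ α⁻¹)
  have hδ : 0 < δ := lt_min ht₀.1 (by positivity)
  have hδt₀ : 0 ≤ t₀ - δ := sub_nonneg.2 (min_le_left _ _)
  have hδα : δ ^ α ≤ α * Gamma α / 2 :=
    calc δ ^ α ≤ ((α * Gamma α / 2) ^ α⁻¹) ^ α := rpow_le_rpow hδ.le (min_le_right _ _) hα0.le
      _ = α * Gamma α / 2 := rpow_inv_rpow (by positivity) hα0.ne'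
  obtain ⟨s₀, hs₀, hmax⟩ :=
    (isCompact_Icc (a := t₀ - δ) (b := t₀)).exists_isMaxOn (nonempty_Icc.2 (by linarith))
      hw.continuousOn
  have hM : 0 < w s₀ := (hpos (t₀ - δ) ⟨hδt₀, by linarith⟩).trans_le (hmax ⟨le_rfl, by linarith⟩)
  have hkey := mittagLefflerRelaxation_sub_le hα0 hα1 (hδt₀.trans hs₀.1) hs₀.2
    (fun s hs => (hpos s ⟨hs.1.le, hs.2.trans_le hs₀.2⟩).le)
    (fun s hs => hmax ⟨hs₀.1.trans hs.1, hs.2⟩)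
  have hsmall : (t₀ - s₀) ^ α / α ≤ Gamma α / 2 := by
    rw [div_le_iff₀ hα0]
    have := rpow_le_rpow (sub_nonneg.2 hs₀.2) (by linarith [hs₀.1] : t₀ - s₀ ≤ δ) hα0.le
    linarith
  rw [hwt₀, sub_zero] at hkey
  nlinarith [mul_le_mul_of_nonneg_left hsmall hM.le]

theorem mittagLefflerRelaxation_le_one (hα0 : 0 < α) (hα1 : α ≤ 1) {t : ℝ} (ht : 0 ≤ t) :
    w t ≤ 1 := by
  have hI := integral_sub_rpow_mul_mittagLefflerRelaxation hα0 hα1 ht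
  have hI_nonneg : 0 ≤ ∫ s in 0..t, (t - s) ^ (α - 1) * w s :=
    intervalIntegral.integral_nonneg ht fun s hs =>
      mul_nonneg (rpow_nonneg (sub_nonneg.2 hs.2) _) (mittagLefflerRelaxation_pos hα0 hα1 hs.1).le
  nlinarith [Gamma_pos_of_pos hα0]

theorem mittagLefflerReal_neg_mem_Ioc (hα0 : 0 < α) (hα1 : α ≤ 1) {x : ℝ} (hx : 0 ≤ x) :
    mittagLefflerReal α 1 (-x) ∈ Ioc 0 1 := by
  rw [← rpow_inv_rpow hx hα0.ne']
  exact ⟨mittagLefflerRelaxation_pos hα0 hα1 (rpow_nonneg hx _),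
    mittagLefflerRelaxation_le_one hα0 hα1 (rpow_nonneg hx _)⟩

end Relaxation

theorem HilbertBasis.inner_tsum_inner_mul_smul {ι E : Type*} [NormedAddCommGroup E]
    [InnerProductSpace ℝ E] (b : HilbertBasis ι ℝ E) {m : ι → ℝ} {C : ℝ} (hm : ∀ i, |m i| ≤ C)
    (x : E) (j : ι) : ⟪∑' i, (⟪x, b i⟫ * m i) • b i, b j⟫ = ⟪x, b j⟫ * m j := by
  have hmem : Memℓp (fun i => ⟪x, b i⟫ * m i) 2 := by
    refine ((b.repr x).2.norm.const_mul C).mono fun i => ?_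
    rw [b.repr_apply_apply, norm_mul, real_inner_comm, mul_comm, Real.norm_eq_abs (m i)]
    gcongr
    exact hm i
  let v : lp (fun _ : ι => ℝ) 2 := ⟨_, hmem⟩
  rw [(b.hasSum_repr_symm v).tsum_eq, real_inner_comm, ← b.repr_apply_apply,
    LinearIsometryEquiv.apply_symm_apply]

/-- Uniqueness of the initial value: if the final-time values
`∑ₖ ⟨g_j, φ_k⟩ E_{α,1}(−λ_k Tᵅ) φ_k` coincide for `j = 1, 2`, then `g₁ = g₂`. -/
theorem initial_value_uniqueness
    {H : Type*} [NormedAddCommGroup H] [InnerProductSpace ℝ H] [CompleteSpace H]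
    (φ : HilbertBasis ℕ ℝ H) (T α : ℝ) (hT : 0 < T) (hα0 : 0 < α) (hα1 : α < 1)
    (lam : ℕ → ℝ) (hpos : ∀ k, 0 < lam k) (g₁ g₂ : H)
    (heq : ∑' k : ℕ, (⟪g₁, φ k⟫ * mittagLefflerReal α 1 (-(lam k * T ^ α))) • φ k =
           ∑' k : ℕ, (⟪g₂, φ k⟫ * mittagLefflerReal α 1 (-(lam k * T ^ α))) • φ k) :
    g₁ = g₂ := by
  have hE (k : ℕ) : mittagLefflerReal α 1 (-(lam k * T ^ α)) ∈ Ioc 0 1 :=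
    mittagLefflerReal_neg_mem_Ioc hα0 hα1.le (mul_nonneg (hpos k).le (rpow_nonneg hT.le α))
  have hbdd (k : ℕ) : |mittagLefflerReal α 1 (-(lam k * T ^ α))| ≤ 1 := by
    rw [abs_of_pos (hE k).1]
    exact (hE k).2
  have hcoeff (k : ℕ) : ⟪g₁, φ k⟫ = ⟪g₂, φ k⟫ := by
    refine mul_right_cancel₀ (hE k).1.ne' ?_
    rw [← φ.inner_tsum_inner_mul_smul hbdd, heq, φ.inner_tsum_inner_mul_smul hbdd]
  refine φ.repr.injective (lp.ext (funext fun k => ?_))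
  rw [φ.repr_apply_apply, φ.repr_apply_apply, real_inner_comm, hcoeff, real_inner_comm]
end

section
/- Let H be a real Hilbert space with a Hilbert (orthonormal) basis (φ_p)_{p∈ℕ}, let T > 0 and 0 < α < 1, and let λ : ℕ → ℝ be a sequence of positive reals with λ_p → +∞. Assume that E_{α,1}(−x) > 0 for all x ≥ 0 and that there is a constant C₀ > 0 with E_{α,1}(−x) ≤ C₀ / (1 + x) for all x ≥ 0. Define h_p := λ_p^{−1/2} φ_p and g_p := (λ_p^{1/2} E_{α,1}(−λ_p T^α))^{−1} φ_p. Then ‖h_p‖ = λ_p^{−1/2} → 0 as p → ∞, while ‖g_p‖ ≥ (T^α / C₀) λ_p^{1/2} for every p, so ‖g_p‖ → +∞ as p → ∞. -/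
/-!
The `φ_p` are unit vectors, so `‖h_p‖` and `‖g_p‖` are just the scalar coefficients. At
`x = λ_p Tᵅ` the decay bound `E_{α,1}(−x) ≤ C₀ / (1 + x)` gives `E_{α,1}(−x)⁻¹ ≥ λ_p Tᵅ / C₀`,
which outweighs the factor `λ_p^{−1/2}` in the coefficient of `g_p`.
-/

open Filter

lemma Orthonormal.norm_smul_apply {ι 𝕜 E : Type*} [RCLike 𝕜] [NormedAddCommGroup E]
    [InnerProductSpace 𝕜 E] {v : ι → E} (hv : Orthonormal 𝕜 v) (c : 𝕜) (i : ι) :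
    ‖c • v i‖ = ‖c‖ := by
  rw [norm_smul, hv.norm_eq_one, mul_one]

lemma div_le_inv_of_le_div_one_add {x C e : ℝ} (hC : 0 < C) (he : 0 < e)
    (hle : e ≤ C / (1 + x)) : x / C ≤ e⁻¹ :=
  calc x / C ≤ (1 + x) / C := by gcongr; linarith
    _ = (C / (1 + x))⁻¹ := (inv_div _ _).symm
    _ ≤ e⁻¹ := inv_anti₀ he hle

lemma div_mul_sqrt_le_inv_sqrt_mul {l t C e : ℝ} (hl : 0 < l) (hC : 0 < C)
    (he : 0 < e) (hle : e ≤ C / (1 + l * t)) : t / C * √l ≤ (√l * e)⁻¹ :=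
  calc t / C * √l = (√l)⁻¹ * (l * t / C) := by
        have hsqrt : 0 < √l := Real.sqrt_pos.2 hl
        field_simp
        rw [Real.sq_sqrt hl.le]
    _ ≤ (√l)⁻¹ * e⁻¹ := by
        gcongr
        exact div_le_inv_of_le_div_one_add hC he hle
    _ = (√l * e)⁻¹ := (mul_inv _ _).symm

theorem backward_problem_illposed_general
    {H : Type*} [NormedAddCommGroup H] [InnerProductSpace ℝ H]
    (φ : HilbertBasis ℕ ℝ H) (T α : ℝ) (hT : 0 < T)
    (lam : ℕ → ℝ) (hpos : ∀ p, 0 < lam p)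
    (htop : Filter.Tendsto lam Filter.atTop Filter.atTop)
    (hMLpos : ∀ x : ℝ, 0 ≤ x → 0 < mittagLefflerReal α 1 (-x))
    (C₀ : ℝ) (hC₀ : 0 < C₀)
    (hbound : ∀ x : ℝ, 0 ≤ x → mittagLefflerReal α 1 (-x) ≤ C₀ / (1 + x))
    (h g : ℕ → H)
    (hh : ∀ p, h p = (Real.sqrt (lam p))⁻¹ • φ p)
    (hg : ∀ p, g p =
      (Real.sqrt (lam p) * mittagLefflerReal α 1 (-(lam p * T ^ α)))⁻¹ • φ p) :
    (∀ p, ‖h p‖ = (Real.sqrt (lam p))⁻¹) ∧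
      Filter.Tendsto (fun p => ‖h p‖) Filter.atTop (nhds 0) ∧
      (∀ p, (T ^ α / C₀) * Real.sqrt (lam p) ≤ ‖g p‖) ∧
      Filter.Tendsto (fun p => ‖g p‖) Filter.atTop Filter.atTop := by
  have hTα : 0 < T ^ α := Real.rpow_pos_of_pos hT α
  have hx p : 0 ≤ lam p * T ^ α := mul_nonneg (hpos p).le hTα.le
  have hnorm_h p : ‖h p‖ = (√(lam p))⁻¹ := by
    rw [hh p, φ.orthonormal.norm_smul_apply, Real.norm_of_nonneg (by positivity)]
  have hnorm_g p : ‖g p‖ = (√(lam p) * mittagLefflerReal α 1 (-(lam p * T ^ α)))⁻¹ := by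
    have hE := hMLpos _ (hx p)
    rw [hg p, φ.orthonormal.norm_smul_apply, Real.norm_of_nonneg (by positivity)]
  have hlower p : T ^ α / C₀ * √(lam p) ≤ ‖g p‖ :=
    hnorm_g p ▸ div_mul_sqrt_le_inv_sqrt_mul (hpos p) hC₀ (hMLpos _ (hx p))
      (hbound _ (hx p))
  have hsqrt : Tendsto (fun p => √(lam p)) atTop atTop := Real.tendsto_sqrt_atTop.comp htop
  refine ⟨hnorm_h, ?_, hlower, ?_⟩
  · simp only [hnorm_h]
    exact hsqrt.inv_tendsto_atTop
  · exact tendsto_atTop_mono hlower (hsqrt.const_mul_atTop (by positivity))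

/-- Ill-posedness of the backward problem: with data `h_p = λ_p^{−1/2} φ_p` and corresponding
initial values `g_p = (λ_p^{1/2} E_{α,1}(−λ_p Tᵅ))^{−1} φ_p`, one has `‖h_p‖ = λ_p^{−1/2} → 0`
while `‖g_p‖ ≥ (Tᵅ/C₀) λ_p^{1/2} → +∞`. -/
theorem backward_problem_illposed
    {H : Type*} [NormedAddCommGroup H] [InnerProductSpace ℝ H] [CompleteSpace H]
    (φ : HilbertBasis ℕ ℝ H) (T α : ℝ) (hT : 0 < T) (hα0 : 0 < α) (hα1 : α < 1)
    (lam : ℕ → ℝ) (hpos : ∀ p, 0 < lam p)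
    (htop : Filter.Tendsto lam Filter.atTop Filter.atTop)
    (hMLpos : ∀ x : ℝ, 0 ≤ x → 0 < mittagLefflerReal α 1 (-x))
    (C₀ : ℝ) (hC₀ : 0 < C₀)
    (hbound : ∀ x : ℝ, 0 ≤ x → mittagLefflerReal α 1 (-x) ≤ C₀ / (1 + x))
    (h g : ℕ → H)
    (hh : ∀ p, h p = (Real.sqrt (lam p))⁻¹ • φ p)
    (hg : ∀ p, g p =
      (Real.sqrt (lam p) * mittagLefflerReal α 1 (-(lam p * T ^ α)))⁻¹ • φ p) :
    (∀ p, ‖h p‖ = (Real.sqrt (lam p))⁻¹) ∧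
      Filter.Tendsto (fun p => ‖h p‖) Filter.atTop (nhds 0) ∧
      (∀ p, (T ^ α / C₀) * Real.sqrt (lam p) ≤ ‖g p‖) ∧
      Filter.Tendsto (fun p => ‖g p‖) Filter.atTop Filter.atTop :=
  backward_problem_illposed_general φ T α hT lam hpos htop hMLpos C₀ hC₀ hbound h g hh hg
end
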